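/- arXiv:2410.20082 — 5 statements merged into one kernel-verified Lean document; each statement's English description precedes it below -/
import Mathlib

section
/- Let a, b : [0,∞) → (0,∞) be decreasing functions with lim_{t→∞} a(t) = lim_{t→∞} b(t) = 0. Suppose there exists γ ∈ (0,1) such that t ↦ t^γ · b(t) is increasing, and suppose there exist constants B, C > 0 such that for every θ > 0, ∑_{n≥1} max(a(n) − θ, 0) ≤ C ∫_0^∞ max(B·b(t) − θ, 0) dt. Then there exists a constant K > 0 such that a(n) ≤ K · b(n) for all integers n ≥ 1. -/
open MeasureTheory Filter Set
open scoped ENNReal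

/-!
Write `f = B b`, fix `n`, a scale `T = c n` with `c` small, and test the hypothesis at the level
`θ = f T`. Since `a` is decreasing, the left side is at least `n (a n - θ)`. On the right,
`(f t - θ)⁺` vanishes for `t ≥ T`, while for `t < T` the monotonicity of `t ^ γ f t` gives
`f t ≤ θ (T / t) ^ γ`, whose integral over `(0, T]` is `θ T / (1 - γ)`. With `2 C c ≤ 1 - γ`
this forces `a n ≤ 3/2 · B b(c n)`, and once more by monotonicity of `t ^ γ b t`,
`b (c n) ≤ c ^ (-γ) b n`.
-/

lemma natCast_mul_ofReal_sub_le_tsum {a : ℝ → ℝ} (ha : AntitoneOn a (Ici 0)) (n : ℕ) (θ : ℝ) :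
    (n : ℝ≥0∞) * ENNReal.ofReal (a n - θ) ≤
      ∑' k : ℕ, ENNReal.ofReal (max (a ((k : ℝ) + 1) - θ) 0) :=
  calc (n : ℝ≥0∞) * ENNReal.ofReal (a n - θ)
      = ∑ _k ∈ Finset.range n, ENNReal.ofReal (a n - θ) := by simp
    _ ≤ ∑ k ∈ Finset.range n, ENNReal.ofReal (max (a ((k : ℝ) + 1) - θ) 0) := by
      refine Finset.sum_le_sum fun k hk => ENNReal.ofReal_le_ofReal (le_max_of_le_left ?_)
      have hkn : (k : ℝ) + 1 ≤ n := by exact_mod_cast Finset.mem_range.mp hk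
      linarith [ha (by positivity : (0 : ℝ) ≤ k + 1) (by positivity : (0 : ℝ) ≤ n) hkn]
    _ ≤ _ := ENNReal.sum_le_tsum _

lemma lintegral_Ioc_rpow_neg {γ T : ℝ} (hγ : γ < 1) (hT : 0 ≤ T) :
    ∫⁻ t in Ioc 0 T, ENNReal.ofReal (t ^ (-γ)) = ENNReal.ofReal (T ^ (1 - γ) / (1 - γ)) := by
  have hγ' : (-1 : ℝ) < -γ := by linarith
  have hint : IntegrableOn (fun t : ℝ => t ^ (-γ)) (Ioc 0 T) := by
    simpa [intervalIntegrable_iff, uIoc_of_le hT] using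
      intervalIntegral.intervalIntegrable_rpow' (a := 0) (b := T) hγ'
  rw [← ofReal_integral_eq_lintegral_ofReal hint
    (ae_restrict_of_forall_mem measurableSet_Ioc fun t ht => Real.rpow_nonneg ht.1.le _),
    ← intervalIntegral.integral_of_le hT, integral_rpow (Or.inl hγ'),
    Real.zero_rpow (by linarith), neg_add_eq_sub, sub_zero]

section Tail

variable {f : ℝ → ℝ} {γ T : ℝ}

lemma posPart_sub_le_indicator (hf_anti : AntitoneOn f (Ici 0))
    (hf_mono : MonotoneOn (fun t => t ^ γ * f t) (Ici 0)) (hT : 0 < T) (hfT : 0 ≤ f T)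
    {t : ℝ} (ht : 0 < t) :
    max (f t - f T) 0 ≤ (Ioc 0 T).indicator (fun s => f T * T ^ γ * s ^ (-γ)) t := by
  rcases le_or_gt t T with htT | hTt
  · rw [indicator_of_mem (show t ∈ Ioc (0 : ℝ) T from ⟨ht, htT⟩)]
    refine max_le ?_ (by positivity)
    rw [Real.rpow_neg ht.le, ← div_eq_mul_inv, le_div_iff₀ (by positivity)]
    nlinarith [hf_mono ht.le hT.le htT, Real.rpow_pos_of_pos ht γ]
  · rw [indicator_of_notMem fun h => hTt.not_ge h.2]
    exact max_le (by linarith [hf_anti hT.le ht.le hTt.le]) le_rfl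

lemma setLIntegral_Ioi_posPart_sub_le (hf_anti : AntitoneOn f (Ici 0))
    (hf_mono : MonotoneOn (fun t => t ^ γ * f t) (Ici 0)) (hγ : γ < 1) (hT : 0 < T)
    (hfT : 0 ≤ f T) :
    ∫⁻ t in Ioi 0, ENNReal.ofReal (max (f t - f T) 0) ≤ ENNReal.ofReal (f T * T / (1 - γ)) :=
  calc ∫⁻ t in Ioi 0, ENNReal.ofReal (max (f t - f T) 0)
      ≤ ∫⁻ t in Ioi 0, (Ioc 0 T).indicator
          (fun s => ENNReal.ofReal (f T * T ^ γ) * ENNReal.ofReal (s ^ (-γ))) t := by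
        refine setLIntegral_mono (by fun_prop (disch := exact measurableSet_Ioc)) fun t ht => ?_
        refine (ENNReal.ofReal_le_ofReal
          (posPart_sub_le_indicator hf_anti hf_mono hT hfT ht)).trans_eq ?_
        simp only [indicator_apply]
        split_ifs
        exacts [ENNReal.ofReal_mul (by positivity), ENNReal.ofReal_zero]
    _ = ENNReal.ofReal (f T * T ^ γ) * ∫⁻ t in Ioc 0 T, ENNReal.ofReal (t ^ (-γ)) := by
        rw [setLIntegral_indicator measurableSet_Ioc, inter_eq_left.mpr Ioc_subset_Ioi_self,
          lintegral_const_mul' _ _ ENNReal.ofReal_ne_top]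
    _ = ENNReal.ofReal (f T * T / (1 - γ)) := by
        rw [lintegral_Ioc_rpow_neg hγ hT.le, ← ENNReal.ofReal_mul (by positivity), mul_assoc,
          mul_div_assoc', ← Real.rpow_add hT, add_sub_cancel, Real.rpow_one, mul_div_assoc]

end Tail

lemma apply_le_of_tsum_le_lintegral {a f : ℝ → ℝ} {γ C T : ℝ} {n : ℕ}
    (ha_anti : AntitoneOn a (Ici 0)) (hf_anti : AntitoneOn f (Ici 0))
    (hf_mono : MonotoneOn (fun t => t ^ γ * f t) (Ici 0)) (hγ : γ < 1) (hC : 0 ≤ C)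
    (hyp : ∀ θ : ℝ, 0 < θ →
      ∑' k : ℕ, ENNReal.ofReal (max (a ((k : ℝ) + 1) - θ) 0) ≤
        ENNReal.ofReal C * ∫⁻ t in Ioi 0, ENNReal.ofReal (max (f t - θ) 0))
    (hn : 0 < n) (hT : 0 < T) (hfT : 0 < f T) (hTn : 2 * C * T ≤ (1 - γ) * n) :
    a n ≤ 3 / 2 * f T := by
  have hγ' : 0 < 1 - γ := by linarith
  have hsum : ENNReal.ofReal (n * (a n - f T)) ≤ ENNReal.ofReal (C * (f T * T / (1 - γ))) := by
    rw [ENNReal.ofReal_mul (Nat.cast_nonneg n), ENNReal.ofReal_natCast, ENNReal.ofReal_mul hC]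
    exact (natCast_mul_ofReal_sub_le_tsum ha_anti n (f T)).trans <| (hyp _ hfT).trans <|
      mul_le_mul_right (setLIntegral_Ioi_posPart_sub_le hf_anti hf_mono hγ hT hfT.le) _
  have hreal := (ENNReal.ofReal_le_ofReal_iff (by positivity)).mp hsum
  have hhalf : C * (f T * T / (1 - γ)) ≤ n * f T / 2 := by
    rw [mul_div_assoc', div_le_div_iff₀ hγ' two_pos]
    nlinarith [mul_le_mul_of_nonneg_right hTn hfT.le]
  have hn' : (0 : ℝ) < n := by exact_mod_cast hn
  nlinarith

lemma rpow_mul_apply_mul_le {b : ℝ → ℝ} {γ c t : ℝ}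
    (hmono : MonotoneOn (fun t => t ^ γ * b t) (Ici 0)) (hc : 0 < c) (hc1 : c ≤ 1) (ht : 0 < t) :
    c ^ γ * b (c * t) ≤ b t := by
  have h := hmono (by positivity : 0 ≤ c * t) ht.le (mul_le_of_le_one_left ht.le hc1)
  dsimp only at h
  rw [Real.mul_rpow hc.le ht.le, mul_right_comm, mul_assoc] at h
  exact le_of_mul_le_mul_left (by linarith) (Real.rpow_pos_of_pos ht γ)

theorem stmt_0_general (a b : ℝ → ℝ) (γ B C : ℝ)
    (hb_pos : ∀ t : ℝ, 0 ≤ t → 0 < b t)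
    (ha_anti : AntitoneOn a (Set.Ici 0)) (hb_anti : AntitoneOn b (Set.Ici 0))
    (hγ1 : γ < 1)
    (hmono : MonotoneOn (fun t : ℝ => t ^ γ * b t) (Set.Ici 0))
    (hB : 0 < B) (hC : 0 < C)
    (hyp : ∀ θ : ℝ, 0 < θ →
      ∑' n : ℕ, ENNReal.ofReal (max (a ((n : ℝ) + 1) - θ) 0) ≤
        ENNReal.ofReal C *
          ∫⁻ t in Set.Ioi (0 : ℝ), ENNReal.ofReal (max (B * b t - θ) 0)) :
    ∃ K : ℝ, 0 < K ∧ ∀ n : ℕ, 1 ≤ n → a n ≤ K * b n := by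
  set c := min 1 ((1 - γ) / (2 * C))
  have hc : 0 < c := lt_min one_pos (div_pos (by linarith) (by positivity))
  have hBb_anti : AntitoneOn (fun t => B * b t) (Ici 0) :=
    fun _ hx _ hy hxy => mul_le_mul_of_nonneg_left (hb_anti hx hy hxy) hB.le
  have hBb_mono : MonotoneOn (fun t => t ^ γ * (B * b t)) (Ici 0) := fun _ hx _ hy hxy => by
    simpa only [mul_left_comm] using mul_le_mul_of_nonneg_left (hmono hx hy hxy) hB.le
  refine ⟨3 / 2 * B / c ^ γ, by positivity, fun n hn => ?_⟩
  have hn' : (0 : ℝ) < n := by exact_mod_cast hn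
  have hcn : 0 < c * n := mul_pos hc hn'
  have hscale : 2 * C * (c * n) ≤ (1 - γ) * n := by
    have := (le_div_iff₀' (by positivity)).mp (min_le_right 1 ((1 - γ) / (2 * C)))
    nlinarith
  have ha := apply_le_of_tsum_le_lintegral ha_anti hBb_anti hBb_mono hγ1 hC.le hyp hn hcn
    (mul_pos hB (hb_pos _ hcn.le)) hscale
  have hb := rpow_mul_apply_mul_le hmono hc (min_le_left _ _) hn'
  have hcγ := Real.rpow_pos_of_pos hc γ
  rw [div_mul_eq_mul_div, le_div_iff₀ hcγ]
  calc a n * c ^ γ ≤ 3 / 2 * (B * b (c * n)) * c ^ γ := mul_le_mul_of_nonneg_right ha hcγ.le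
    _ = 3 / 2 * B * (c ^ γ * b (c * n)) := by ring
    _ ≤ 3 / 2 * B * b n := mul_le_mul_of_nonneg_left hb (by positivity)

/-- Lemma 2.9(1): from a convex-function (Abel-type) majorization of the sums of
`(a(n) - θ)⁺` by integrals of `(B·b(t) - θ)⁺`, deduce `a(n) ≲ b(n)`. -/
theorem stmt_0 (a b : ℝ → ℝ) (γ B C : ℝ)
    (ha_pos : ∀ t : ℝ, 0 ≤ t → 0 < a t) (hb_pos : ∀ t : ℝ, 0 ≤ t → 0 < b t)
    (ha_anti : AntitoneOn a (Set.Ici 0)) (hb_anti : AntitoneOn b (Set.Ici 0))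
    (ha_lim : Tendsto a atTop (nhds 0)) (hb_lim : Tendsto b atTop (nhds 0))
    (hγ : 0 < γ) (hγ1 : γ < 1)
    (hmono : MonotoneOn (fun t : ℝ => t ^ γ * b t) (Set.Ici 0))
    (hB : 0 < B) (hC : 0 < C)
    (hyp : ∀ θ : ℝ, 0 < θ →
      ∑' n : ℕ, ENNReal.ofReal (max (a ((n : ℝ) + 1) - θ) 0) ≤
        ENNReal.ofReal C *
          ∫⁻ t in Set.Ioi (0 : ℝ), ENNReal.ofReal (max (B * b t - θ) 0)) :
    ∃ K : ℝ, 0 < K ∧ ∀ n : ℕ, 1 ≤ n → a n ≤ K * b n :=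
  stmt_0_general a b γ B C hb_pos ha_anti hb_anti hγ1 hmono hB hC hyp
end

section
/- Let a, b : [0,∞) → (0,∞) be decreasing functions with lim_{t→∞} a(t) = lim_{t→∞} b(t) = 0. Suppose there exists γ ∈ (0,1) such that the sequence n ↦ n^γ · a(n) is increasing, and suppose there exist constants B, C > 0 such that for every θ > 0, ∫_0^∞ max(b(t)/B − θ, 0) dt ≤ C ∑_{n≥1} max(a(n) − θ, 0). Then there exists a constant K > 0 such that b(n) ≤ K · a(n) for all integers n ≥ 1. -/
open MeasureTheory Filter

open Real in
lemma sum_rpow_neg_bound {γ : ℝ} (hγ : 0 < γ) (hγ1 : γ < 1) (N : ℕ) :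
    ∑ n ∈ Finset.range N, ((n : ℝ) + 1) ^ (-γ) ≤ (N : ℝ) ^ (1 - γ) / (1 - γ) := by
  induction N with
  | zero => simp [Real.zero_rpow (by linarith : (1 - γ) ≠ 0)]
  | succ N ih =>
    rw [Finset.sum_range_succ]
    push_cast
    have hx : (0:ℝ) < (N : ℝ) + 1 := by positivity
    have hp : (0:ℝ) < 1 - γ := by linarith
    have key : (N : ℝ) ^ (1 - γ) + (1 - γ) * ((N:ℝ)+1) ^ (-γ) ≤ ((N:ℝ)+1) ^ (1 - γ) := by
      have hbern : (1 + (-(1/((N:ℝ)+1)))) ^ (1-γ) ≤ 1 + (1-γ) * (-(1/((N:ℝ)+1))) :=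
        rpow_one_add_le_one_add_mul_self (by rw [neg_le, neg_neg]; rw [div_le_one hx]; linarith)
          hp.le (by linarith)
      have h1 : (1 : ℝ) + (-(1/((N:ℝ)+1))) = (N:ℝ) / ((N:ℝ)+1) := by field_simp; ring
      rw [h1] at hbern
      have h2 : ((N:ℝ) / ((N:ℝ)+1)) ^ (1-γ) = (N:ℝ) ^ (1-γ) / ((N:ℝ)+1) ^ (1-γ) :=
        Real.div_rpow (Nat.cast_nonneg N) hx.le (1-γ)
      rw [h2] at hbern
      have h3 : ((N:ℝ)+1) ^ (-γ) = ((N:ℝ)+1) ^ (1-γ) / ((N:ℝ)+1) := by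
        rw [eq_div_iff hx.ne', ← Real.rpow_add_one hx.ne']
        ring_nf
      rw [h3]
      have hxp : (0:ℝ) < ((N:ℝ)+1) ^ (1-γ) := Real.rpow_pos_of_pos hx _
      rw [div_le_iff₀ hxp] at hbern
      calc (N : ℝ) ^ (1 - γ) + (1 - γ) * (((N:ℝ)+1) ^ (1-γ) / ((N:ℝ)+1))
          ≤ (1 + (1-γ) * (-(1/((N:ℝ)+1)))) * ((N:ℝ)+1) ^ (1-γ)
            + (1 - γ) * (((N:ℝ)+1) ^ (1-γ) / ((N:ℝ)+1)) := by linarith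
        _ = ((N:ℝ)+1) ^ (1 - γ) := by field_simp; ring
    calc ∑ n ∈ Finset.range N, ((n : ℝ) + 1) ^ (-γ) + ((N:ℝ)+1) ^ (-γ)
        ≤ (N : ℝ) ^ (1 - γ) / (1 - γ) + ((N:ℝ)+1) ^ (-γ) := by linarith
      _ ≤ ((N:ℝ)+1) ^ (1 - γ) / (1 - γ) := by
          rw [div_add' _ _ _ hp.ne', div_le_div_iff_of_pos_right hp]
          linarith

/-- Lemma 2.9(2): from a convex-function minorization of the sums of `(a(n) - θ)⁺`
by integrals of `(b(t)/B - θ)⁺`, deduce `b(n) ≲ a(n)`. -/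
theorem stmt_1 (a b : ℝ → ℝ) (γ B C : ℝ)
    (ha_pos : ∀ t : ℝ, 0 ≤ t → 0 < a t) (hb_pos : ∀ t : ℝ, 0 ≤ t → 0 < b t)
    (ha_anti : AntitoneOn a (Set.Ici 0)) (hb_anti : AntitoneOn b (Set.Ici 0))
    (ha_lim : Tendsto a atTop (nhds 0)) (hb_lim : Tendsto b atTop (nhds 0))
    (hγ : 0 < γ) (hγ1 : γ < 1)
    (hmono : Monotone (fun n : ℕ => (n : ℝ) ^ γ * a n))
    (hB : 0 < B) (hC : 0 < C)
    (hyp : ∀ θ : ℝ, 0 < θ →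
      (∫⁻ t in Set.Ioi (0 : ℝ), ENNReal.ofReal (max (b t / B - θ) 0)) ≤
        ENNReal.ofReal C * ∑' n : ℕ, ENNReal.ofReal (max (a ((n : ℝ) + 1) - θ) 0)) :
    ∃ K : ℝ, 0 < K ∧ ∀ n : ℕ, 1 ≤ n → b n ≤ K * a n := by
  have hp : (0:ℝ) < 1 - γ := by linarith
  refine ⟨B * (1 + C / (1 - γ)), by positivity, ?_⟩
  intro N hN
  have hN1 : (1:ℝ) ≤ (N:ℝ) := by exact_mod_cast hN
  have hNpos : (0:ℝ) < (N:ℝ) := by linarith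
  have haN : 0 < a (N:ℝ) := ha_pos _ (Nat.cast_nonneg N)
  set M : ℝ := max (b (N:ℝ) / B - a (N:ℝ)) 0 with hMdef
  have hM0 : (0:ℝ) ≤ M := le_max_right _ _
  -- Lower bound on the integral
  have lower : ENNReal.ofReal M * ENNReal.ofReal (N:ℝ) ≤
      ∫⁻ t in Set.Ioi (0:ℝ), ENNReal.ofReal (max (b t / B - a (N:ℝ)) 0) := by
    have hind : ∀ t : ℝ,
        (Set.Ioc (0:ℝ) (N:ℝ)).indicator (fun _ => ENNReal.ofReal M) t ≤
          ENNReal.ofReal (max (b t / B - a (N:ℝ)) 0) := by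
      intro t
      by_cases ht : t ∈ Set.Ioc (0:ℝ) (N:ℝ)
      · rw [Set.indicator_of_mem ht]
        apply ENNReal.ofReal_le_ofReal
        have hbt : b (N:ℝ) ≤ b t :=
          hb_anti (Set.mem_Ici.2 ht.1.le) (Set.mem_Ici.2 (Nat.cast_nonneg N)) ht.2
        have : b (N:ℝ) / B ≤ b t / B := by gcongr
        exact max_le_max (by linarith) le_rfl
      · rw [Set.indicator_of_notMem ht]; exact zero_le
    calc ENNReal.ofReal M * ENNReal.ofReal (N:ℝ)
        = ∫⁻ t in Set.Ioi (0:ℝ),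
            (Set.Ioc (0:ℝ) (N:ℝ)).indicator (fun _ => ENNReal.ofReal M) t := by
          rw [lintegral_indicator measurableSet_Ioc,
            Measure.restrict_restrict measurableSet_Ioc,
            Set.inter_eq_self_of_subset_left Set.Ioc_subset_Ioi_self,
            setLIntegral_const, Real.volume_Ioc]
          simp
      _ ≤ _ := lintegral_mono hind
  -- Upper bound on the sum
  have hvanish : ∀ n ∉ Finset.range N,
      ENNReal.ofReal (max (a ((n:ℝ)+1) - a (N:ℝ)) 0) = 0 := by
    intro n hn
    have h1 : N ≤ n := by simpa [Finset.mem_range] using hn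
    have h2 : (N:ℝ) ≤ (n:ℝ)+1 := by
      have : (N:ℝ) ≤ (n:ℝ) := by exact_mod_cast h1
      linarith
    have h3 : a ((n:ℝ)+1) ≤ a (N:ℝ) :=
      ha_anti (Set.mem_Ici.2 (Nat.cast_nonneg N)) (Set.mem_Ici.2 (by positivity)) h2
    simp [max_eq_right (by linarith : a ((n:ℝ)+1) - a (N:ℝ) ≤ 0)]
  have hterm : ∀ n ∈ Finset.range N,
      max (a ((n:ℝ)+1) - a (N:ℝ)) 0 ≤ (N:ℝ)^γ * a (N:ℝ) * ((n:ℝ)+1)^(-γ) := by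
    intro n hn
    have hn' : n + 1 ≤ N := Finset.mem_range.1 hn
    have h1 := hmono hn'
    simp only [] at h1
    push_cast at h1
    have hpos : (0:ℝ) < ((n:ℝ)+1) := by positivity
    have hpow : (0:ℝ) < ((n:ℝ)+1)^γ := Real.rpow_pos_of_pos hpos γ
    have ha1 : 0 < a ((n:ℝ)+1) := ha_pos _ (by positivity)
    have key : a ((n:ℝ)+1) ≤ (N:ℝ)^γ * a (N:ℝ) * ((n:ℝ)+1)^(-γ) := by
      rw [Real.rpow_neg hpos.le, ← div_eq_mul_inv, le_div_iff₀ hpow, mul_comm]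
      exact h1
    have hle : max (a ((n:ℝ)+1) - a (N:ℝ)) 0 ≤ a ((n:ℝ)+1) :=
      max_le (by linarith) ha1.le
    linarith
  have hNN : (N:ℝ)^γ * (N:ℝ)^(1-γ) = (N:ℝ) := by
    rw [← Real.rpow_add hNpos]; simp
  have hsum : (∑' n : ℕ, ENNReal.ofReal (max (a ((n:ℝ)+1) - a (N:ℝ)) 0)) ≤
      ENNReal.ofReal ((N:ℝ) * a (N:ℝ) / (1-γ)) := by
    rw [tsum_eq_sum hvanish]
    calc ∑ n ∈ Finset.range N, ENNReal.ofReal (max (a ((n:ℝ)+1) - a (N:ℝ)) 0)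
        ≤ ∑ n ∈ Finset.range N, ENNReal.ofReal ((N:ℝ)^γ * a (N:ℝ) * ((n:ℝ)+1)^(-γ)) :=
          Finset.sum_le_sum fun n hn => ENNReal.ofReal_le_ofReal (hterm n hn)
      _ = ENNReal.ofReal (∑ n ∈ Finset.range N, (N:ℝ)^γ * a (N:ℝ) * ((n:ℝ)+1)^(-γ)) := by
          rw [ENNReal.ofReal_sum_of_nonneg]
          intro n _
          have : (0:ℝ) < ((n:ℝ)+1)^(-γ) := Real.rpow_pos_of_pos (by positivity) _
          positivity
      _ ≤ ENNReal.ofReal ((N:ℝ) * a (N:ℝ) / (1-γ)) := by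
          apply ENNReal.ofReal_le_ofReal
          rw [← Finset.mul_sum]
          have hs := sum_rpow_neg_bound hγ hγ1 N
          calc (N:ℝ)^γ * a (N:ℝ) * ∑ n ∈ Finset.range N, ((n:ℝ)+1)^(-γ)
              ≤ (N:ℝ)^γ * a (N:ℝ) * ((N:ℝ)^(1-γ)/(1-γ)) := by
                apply mul_le_mul_of_nonneg_left hs
                positivity
            _ = ((N:ℝ)^γ * (N:ℝ)^(1-γ)) * a (N:ℝ) / (1-γ) := by ring
            _ = (N:ℝ) * a (N:ℝ) / (1-γ) := by rw [hNN]
  have hθ : 0 < a (N:ℝ) := haN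
  have chain : ENNReal.ofReal M * ENNReal.ofReal (N:ℝ) ≤
      ENNReal.ofReal C * ENNReal.ofReal ((N:ℝ) * a (N:ℝ) / (1-γ)) :=
    lower.trans ((hyp (a (N:ℝ)) hθ).trans (mul_le_mul_right hsum _))
  rw [← ENNReal.ofReal_mul hM0, ← ENNReal.ofReal_mul hC.le] at chain
  have hRHSnn : (0:ℝ) ≤ C * ((N:ℝ) * a (N:ℝ) / (1-γ)) := by positivity
  have hreal : M * (N:ℝ) ≤ C * ((N:ℝ) * a (N:ℝ) / (1-γ)) :=
    (ENNReal.ofReal_le_ofReal_iff hRHSnn).1 chain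
  have hMle : M ≤ C * a (N:ℝ) / (1-γ) := by
    have h : M * (N:ℝ) ≤ (C * a (N:ℝ) / (1-γ)) * (N:ℝ) := by
      calc M * (N:ℝ) ≤ C * ((N:ℝ) * a (N:ℝ) / (1-γ)) := hreal
        _ = (C * a (N:ℝ) / (1-γ)) * (N:ℝ) := by ring
    exact le_of_mul_le_mul_right h hNpos
  have hbM : b (N:ℝ) / B - a (N:ℝ) ≤ M := le_max_left _ _
  have hfin : b (N:ℝ) / B ≤ a (N:ℝ) + C * a (N:ℝ) / (1-γ) := by linarith
  rw [div_le_iff₀ hB] at hfin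
  have heq : (a (N:ℝ) + C * a (N:ℝ) / (1-γ)) * B = B * (1 + C / (1-γ)) * a (N:ℝ) := by
    field_simp
  linarith
end

section
/- Let 0 < γ < p, let a : [0,∞) → (0,∞) be a decreasing function with lim_{t→∞} a(t) = 0, and let ρ be an increasing positive function such that x ↦ ρ(x)/x^γ is decreasing. Suppose that for every increasing function h : [0,∞) → [0,∞) such that t ↦ h(t^p) is convex, one has ∑_{n≥1} h(a(n)) ≤ ∫_0^∞ h(1/ρ(t)) dt. Then there exists a constant C depending only on p and γ such that a(n) ≤ C/ρ(n) for all integers n ≥ 1. -/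
open MeasureTheory Filter

/-- Lemma 2.10: if `∑ h(a(n)) ≤ ∫_0^∞ h(1/ρ(t)) dt` for all increasing `h` with
`h(t^p)` convex, then `a(n) ≤ C/ρ(n)`. -/
theorem stmt_2 (p γ : ℝ) (a ρ : ℝ → ℝ)
    (hγ : 0 < γ) (hγp : γ < p)
    (ha_pos : ∀ t : ℝ, 0 ≤ t → 0 < a t) (ha_anti : AntitoneOn a (Set.Ici 0))
    (ha_lim : Tendsto a atTop (nhds 0))
    (hρ_pos : ∀ x : ℝ, 0 ≤ x → 0 < ρ x) (hρ_mono : MonotoneOn ρ (Set.Ici 0))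
    (hratio : AntitoneOn (fun x : ℝ => ρ x / x ^ γ) (Set.Ioi 0))
    (hyp : ∀ h : ℝ → ℝ, (∀ t : ℝ, 0 ≤ t → 0 ≤ h t) → MonotoneOn h (Set.Ici 0) →
      ConvexOn ℝ (Set.Ici 0) (fun t : ℝ => h (t ^ p)) →
      ∑' n : ℕ, ENNReal.ofReal (h (a ((n : ℝ) + 1))) ≤
        ∫⁻ t in Set.Ioi (0 : ℝ), ENNReal.ofReal (h (1 / ρ t))) :
    ∃ C : ℝ, 0 < C ∧ ∀ n : ℕ, 1 ≤ n → a n ≤ C / ρ n := by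
  have hp : 0 < p := hγ.trans hγp
  set q : ℝ := γ / p with hqdef
  have hq0 : 0 < q := div_pos hγ hp
  have hq1 : q < 1 := (div_lt_one hp).mpr hγp
  have h1q : 0 < 1 - q := by linarith
  set M : ℝ := 1 + 1 / (1 - q) with hM
  have hM0 : 0 < M := by
    have : 0 < 1 / (1 - q) := by positivity
    simp only [hM]; linarith
  refine ⟨M ^ p, Real.rpow_pos_of_pos hM0 p, ?_⟩
  intro n hn
  have hn0 : (0:ℝ) < (n:ℝ) := by exact_mod_cast Nat.lt_of_lt_of_le Nat.zero_lt_one hn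
  have hρn : 0 < ρ n := hρ_pos _ hn0.le
  set c : ℝ := (1 / ρ n) ^ (1/p) with hc
  have hc0 : 0 < c := Real.rpow_pos_of_pos (by positivity) _
  set h : ℝ → ℝ := fun t => max (t ^ (1/p) - c) 0 with hh
  have h_nonneg : ∀ t : ℝ, 0 ≤ t → 0 ≤ h t := fun t _ => le_max_right _ _
  have h_mono : MonotoneOn h (Set.Ici 0) := by
    intro x hx y _ hxy
    exact max_le_max (sub_le_sub_right
      (Real.rpow_le_rpow hx hxy (by positivity)) c) le_rfl
  have h_conv : ConvexOn ℝ (Set.Ici 0) (fun t : ℝ => h (t ^ p)) := by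
    have hconv : ConvexOn ℝ (Set.Ici (0:ℝ)) ((fun t : ℝ => t - c) ⊔ (fun _ : ℝ => 0)) :=
      (((convexOn_id (convex_Ici 0)).sub (concaveOn_const c (convex_Ici 0)))).sup
        (convexOn_const 0 (convex_Ici 0))
    refine hconv.congr fun t ht => ?_
    have ht0 : (0:ℝ) ≤ t := ht
    simp only [hh, Pi.sup_apply]
    rw [← Real.rpow_mul ht0, mul_one_div, div_self hp.ne', Real.rpow_one]
  have key := hyp h h_nonneg h_mono h_conv
  -- lower bound for the sum
  have lb : (n : ENNReal) * ENNReal.ofReal (h (a n)) ≤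
      ∑' k : ℕ, ENNReal.ofReal (h (a ((k : ℝ) + 1))) := by
    have : (n : ENNReal) * ENNReal.ofReal (h (a n)) =
        ∑ _k ∈ Finset.range n, ENNReal.ofReal (h (a n)) := by
      simp [Finset.sum_const, nsmul_eq_mul]
    rw [this]
    refine le_trans (Finset.sum_le_sum fun k hk => ?_) (ENNReal.sum_le_tsum _)
    refine ENNReal.ofReal_le_ofReal ?_
    have hk1 : (k : ℝ) + 1 ≤ (n : ℝ) := by
      have := Finset.mem_range.mp hk
      exact_mod_cast Nat.succ_le_of_lt this
    have hk0 : (0:ℝ) ≤ (k:ℝ) + 1 := by positivity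
    exact h_mono (Set.mem_Ici.mpr (ha_pos _ hn0.le).le
      : a n ∈ Set.Ici (0:ℝ)) (Set.mem_Ici.mpr (ha_pos _ hk0).le)
      (ha_anti (Set.mem_Ici.mpr hk0) (Set.mem_Ici.mpr hn0.le) hk1)
  -- upper bound for the integral
  set K : ℝ := (1 / ρ n) ^ (1/p) * (n:ℝ) ^ q with hK
  have hK0 : 0 ≤ K := by
    have := hc0.le
    have : (0:ℝ) ≤ (n:ℝ) ^ q := (Real.rpow_pos_of_pos hn0 q).le
    positivity
  have ub : (∫⁻ t in Set.Ioi (0:ℝ), ENNReal.ofReal (h (1 / ρ t))) ≤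
      ENNReal.ofReal (K * ((n:ℝ) ^ (1-q) / (1-q))) := by
    have meas : Measurable fun t : ℝ =>
        (Set.Ioc (0:ℝ) n).indicator (fun t => ENNReal.ofReal (K * t ^ (-q))) t := by
      refine Measurable.indicator ?_ measurableSet_Ioc
      fun_prop
    have step1 : (∫⁻ t in Set.Ioi (0:ℝ), ENNReal.ofReal (h (1 / ρ t))) ≤
        ∫⁻ t in Set.Ioi (0:ℝ),
          (Set.Ioc (0:ℝ) n).indicator (fun t => ENNReal.ofReal (K * t ^ (-q))) t := by
      refine setLIntegral_mono meas fun t ht => ?_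
      have ht0 : (0:ℝ) < t := ht
      have hρt : 0 < ρ t := hρ_pos _ ht0.le
      by_cases htn : t ≤ (n:ℝ)
      · rw [Set.indicator_of_mem (Set.mem_Ioc.mpr ⟨ht0, htn⟩)]
        refine ENNReal.ofReal_le_ofReal ?_
        have hbound : (1 / ρ t) ≤ (n:ℝ) ^ γ / (ρ n * t ^ γ) := by
          have hr := hratio (Set.mem_Ioi.mpr ht0) (Set.mem_Ioi.mpr hn0) htn
          -- hr : ρ n / n ^ γ ≤ ρ t / t ^ γ
          have htγ : (0:ℝ) < t ^ γ := Real.rpow_pos_of_pos ht0 γ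
          have hnγ : (0:ℝ) < (n:ℝ) ^ γ := Real.rpow_pos_of_pos hn0 γ
          rw [div_le_div_iff₀ hρt (by positivity)]
          rw [div_le_div_iff₀ hnγ htγ] at hr
          nlinarith
        have h1 : h (1 / ρ t) ≤ (1 / ρ t) ^ (1/p) := by
          simp only [hh]
          have : (1 / ρ t) ^ (1/p) - c ≤ (1 / ρ t) ^ (1/p) := by linarith [hc0]
          exact max_le this (Real.rpow_nonneg (by positivity) _)
        refine h1.trans ?_
        have h2 : (1 / ρ t) ^ (1/p) ≤ ((n:ℝ) ^ γ / (ρ n * t ^ γ)) ^ (1/p) :=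
          Real.rpow_le_rpow (by positivity) hbound (by positivity)
        refine h2.trans_eq ?_
        have htγ : (0:ℝ) < t ^ γ := Real.rpow_pos_of_pos ht0 γ
        have hnγ : (0:ℝ) < (n:ℝ) ^ γ := Real.rpow_pos_of_pos hn0 γ
        have e1 : (n:ℝ) ^ γ / (ρ n * t ^ γ) = (1 / ρ n) * ((n:ℝ) ^ γ * (t ^ γ)⁻¹) := by
          field_simp
        rw [e1, Real.mul_rpow (by positivity) (by positivity),
          Real.mul_rpow (by positivity) (by positivity), hK]
        have e2 : ((n:ℝ) ^ γ) ^ (1/p) = (n:ℝ) ^ q := by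
          rw [← Real.rpow_mul hn0.le, mul_one_div, hqdef]
        have e3 : ((t ^ γ)⁻¹) ^ (1/p) = t ^ (-q) := by
          rw [← Real.rpow_neg_one (t ^ γ), ← Real.rpow_mul ht0.le,
            ← Real.rpow_mul ht0.le]
          congr 1
          rw [hqdef]; ring
        rw [e2, e3]; ring
      · push_neg at htn
        rw [Set.indicator_of_notMem (by simp [Set.mem_Ioc, not_and, htn.not_ge])]
        have : h (1 / ρ t) = 0 := by
          simp only [hh]
          have hρle : ρ n ≤ ρ t := hρ_mono (Set.mem_Ici.mpr hn0.le)
            (Set.mem_Ici.mpr ht0.le) htn.le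
          have : (1 / ρ t) ^ (1/p) ≤ c := by
            rw [hc]
            exact Real.rpow_le_rpow (by positivity)
              (one_div_le_one_div_of_le hρn hρle) (by positivity)
          exact max_eq_right (by linarith)
        rw [this]; simp
    refine step1.trans ?_
    rw [lintegral_indicator measurableSet_Ioc,
      Measure.restrict_restrict measurableSet_Ioc,
      Set.inter_eq_self_of_subset_left (Set.Ioc_subset_Ioi_self)]
    have hint : IntegrableOn (fun t : ℝ => t ^ (-q)) (Set.Ioc (0:ℝ) n) := by
      rw [← intervalIntegrable_iff_integrableOn_Ioc_of_le hn0.le]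
      exact intervalIntegral.intervalIntegrable_rpow' (by linarith)
    have hval : (∫ t in Set.Ioc (0:ℝ) (n:ℝ), t ^ (-q)) = (n:ℝ) ^ (1-q) / (1-q) := by
      rw [← intervalIntegral.integral_of_le hn0.le]
      rw [integral_rpow (Or.inl (by linarith))]
      rw [Real.zero_rpow (by linarith : -q + 1 ≠ 0)]
      rw [show -q + 1 = 1 - q by ring]
      ring
    calc ∫⁻ t in Set.Ioc (0:ℝ) n, ENNReal.ofReal (K * t ^ (-q))
        = ∫⁻ t in Set.Ioc (0:ℝ) n, ENNReal.ofReal K * ENNReal.ofReal (t ^ (-q)) := by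
          refine lintegral_congr fun t => ?_
          rw [ENNReal.ofReal_mul hK0]
      _ = ENNReal.ofReal K * ∫⁻ t in Set.Ioc (0:ℝ) n, ENNReal.ofReal (t ^ (-q)) := by
          rw [lintegral_const_mul]
          fun_prop
      _ = ENNReal.ofReal K * ENNReal.ofReal ((n:ℝ) ^ (1-q) / (1-q)) := by
          rw [← ofReal_integral_eq_lintegral_ofReal hint
            (ae_restrict_of_forall_mem measurableSet_Ioc fun t ht =>
              Real.rpow_nonneg (le_of_lt ht.1) _), hval]
      _ = ENNReal.ofReal (K * ((n:ℝ) ^ (1-q) / (1-q))) := by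
          rw [← ENNReal.ofReal_mul hK0]
      _ ≤ ENNReal.ofReal (K * ((n:ℝ) ^ (1-q) / (1-q))) := le_rfl
  -- combine everything
  have main : (n : ENNReal) * ENNReal.ofReal (h (a n)) ≤
      ENNReal.ofReal (K * ((n:ℝ) ^ (1-q) / (1-q))) := lb.trans (key.trans ub)
  set D : ℝ := (1 / ρ n) ^ (1/p) / (1 - q) with hD
  have hD0 : 0 ≤ D := by positivity
  have e : K * ((n:ℝ) ^ (1-q) / (1-q)) = (n:ℝ) * D := by
    have hnn : (n:ℝ) ^ q * (n:ℝ) ^ (1-q) = (n:ℝ) := by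
      rw [← Real.rpow_add hn0]; simp
    calc K * ((n:ℝ) ^ (1-q) / (1-q))
        = ((n:ℝ) ^ q * (n:ℝ) ^ (1-q)) * D := by rw [hK, hD]; ring
      _ = (n:ℝ) * D := by rw [hnn]
  rw [e, ENNReal.ofReal_mul hn0.le, ENNReal.ofReal_natCast] at main
  have main2 : ENNReal.ofReal (h (a n)) ≤ ENNReal.ofReal D := by
    refine (ENNReal.mul_le_mul_iff_right ?_ ?_).mp main
    · exact Nat.cast_ne_zero.mpr (by omega)
    · exact ENNReal.natCast_ne_top n
  have hreal : h (a n) ≤ D := (ENNReal.ofReal_le_ofReal_iff hD0).mp main2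
  have hsum : a n ^ (1/p) ≤ (1 / ρ n) ^ (1/p) * M := by
    have h1 : a n ^ (1/p) - c ≤ D := le_trans (le_max_left _ _) hreal
    have : a n ^ (1/p) ≤ c + D := by linarith
    refine this.trans_eq ?_
    rw [hc, hD, hM]; ring
  have han : 0 ≤ a n := (ha_pos _ hn0.le).le
  have e2 : a n = (a n ^ (1/p)) ^ p := by
    rw [← Real.rpow_mul han, one_div, inv_mul_cancel₀ hp.ne', Real.rpow_one]
  rw [e2]
  calc (a n ^ (1/p)) ^ p ≤ ((1 / ρ n) ^ (1/p) * M) ^ p :=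
        Real.rpow_le_rpow (Real.rpow_nonneg han _) hsum hp.le
    _ = M ^ p / ρ n := by
        rw [Real.mul_rpow (Real.rpow_nonneg (by positivity) _) hM0.le,
          ← Real.rpow_mul (by positivity : (0:ℝ) ≤ 1 / ρ n), one_div p,
          inv_mul_cancel₀ hp.ne', Real.rpow_one]
        field_simp
end

section
/- Let 0 < γ < p, let a : [0,∞) → (0,∞) be a strictly decreasing function with lim_{t→∞} a(t) = 0, and let ρ be a strictly increasing positive function such that x ↦ ρ(x)/x^γ is decreasing. If for every δ > 0 one has ∑_{a(n) ≥ 2δ} a(n)^{1/p} ≤ (1 − 2^{−1/p})^{-1} ∫_{ρ(t) ≤ 1/δ} ρ(t)^{−1/p} dt, then there exists a constant C depending only on p and γ such that δ^{1/p} · #{n ≥ 1 : a(n) ≥ 2δ} ≤ C · δ^{1/p} · ρ^{−1}(1/δ) for all δ > 0 in the range of 1/ρ. -/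
/-!
Put `δ = 1 / ρ x`. Every term of the sum over `{n ≥ 1 : a n ≥ 2δ}` is at least `(2δ)^{1/p}`, so the
sum is at least `(2δ)^{1/p}` times the count. Since `ρ` is increasing, the domain of the integral
lies in `(0, x]`, and since `ρ t / t^γ` is decreasing, `ρ t ^ (-1/p) ≤ ρ x ^ (-1/p) (x / t)^{γ/p}`
there. As `γ/p < 1` this majorant is integrable at `0`, with integral `δ^{1/p} x / (1 - γ/p)`, so
`C = (1 - 2^{-1/p})⁻¹ / (2^{1/p} (1 - γ/p))` works.
-/

open MeasureTheory Filter Set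

lemma natCard_mul_le_tsum {α : Type*} {f : α → ENNReal} {c : ENNReal} (h : ∀ i, c ≤ f i) :
    Nat.card α * c ≤ ∑' i, f i := by
  cases finite_or_infinite α with
  | inr _ => simp
  | inl _ =>
    have := Fintype.ofFinite α
    rw [tsum_fintype, Nat.card_eq_fintype_card, ← Finset.card_univ, ← nsmul_eq_mul]
    exact Finset.card_nsmul_le_sum _ _ _ fun i _ => h i

lemma lintegral_Ioc_zero_mul_rpow_neg {c β x : ℝ} (hc : 0 ≤ c) (hβ : β < 1) (hx : 0 ≤ x) :
    ∫⁻ t in Ioc 0 x, ENNReal.ofReal (c * t ^ (-β)) = ENNReal.ofReal (c * x ^ (1 - β) / (1 - β)) := by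
  have hβ' : -1 < -β := by linarith
  have hint : IntegrableOn (fun t : ℝ => c * t ^ (-β)) (Ioc 0 x) := by
    rw [← intervalIntegrable_iff_integrableOn_Ioc_of_le hx]
    exact (intervalIntegral.intervalIntegrable_rpow' hβ').const_mul c
  have hnonneg : 0 ≤ᵐ[volume.restrict (Ioc 0 x)] fun t => c * t ^ (-β) :=
    (ae_restrict_iff' measurableSet_Ioc).mpr <| ae_of_all _ fun t ht => by
      have := ht.1
      positivity
  rw [← ofReal_integral_eq_lintegral_ofReal hint hnonneg, integral_const_mul,
    ← intervalIntegral.integral_of_le hx, integral_rpow (Or.inl hβ'),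
    Real.zero_rpow (by linarith), sub_zero, neg_add_eq_sub, mul_div_assoc]

lemma rpow_neg_le_of_antitoneOn_div_rpow {ρ : ℝ → ℝ} {γ s t x : ℝ}
    (hratio : AntitoneOn (fun x => ρ x / x ^ γ) (Ioi 0)) (hρx : 0 < ρ x) (hs : 0 ≤ s)
    (ht : 0 < t) (htx : t ≤ x) :
    ρ t ^ (-s) ≤ ρ x ^ (-s) * x ^ (γ * s) * t ^ (-(γ * s)) := by
  have hx : 0 < x := ht.trans_le htx
  have hlow : ρ x * t ^ γ / x ^ γ ≤ ρ t := by
    have := hratio ht hx htx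
    simp only at this
    rw [div_le_div_iff₀ (by positivity) (by positivity)] at this
    rw [div_le_iff₀ (by positivity)]
    linarith
  calc ρ t ^ (-s) ≤ (ρ x * t ^ γ / x ^ γ) ^ (-s) :=
        Real.rpow_le_rpow_of_nonpos (by positivity) hlow (neg_nonpos.mpr hs)
    _ = ρ x ^ (-s) * x ^ (γ * s) * t ^ (-(γ * s)) := by
        rw [Real.div_rpow (by positivity) (by positivity), Real.mul_rpow hρx.le (by positivity),
          ← Real.rpow_mul ht.le, ← Real.rpow_mul hx.le, mul_neg, Real.rpow_neg hx.le, div_inv_eq_mul]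
        ring

lemma setLIntegral_sublevel_rpow_neg_le {ρ : ℝ → ℝ} {γ s x : ℝ}
    (hρ_mono : StrictMonoOn ρ (Ici 0)) (hratio : AntitoneOn (fun x => ρ x / x ^ γ) (Ioi 0))
    (hρx : 0 < ρ x) (hx : 0 ≤ x) (hs : 0 ≤ s) (hγs : γ * s < 1) :
    ∫⁻ t in Ioi 0 ∩ {t | ρ t ≤ ρ x}, ENNReal.ofReal (ρ t ^ (-s)) ≤
      ENNReal.ofReal (ρ x ^ (-s) * x / (1 - γ * s)) := by
  have hsub : Ioi 0 ∩ {t | ρ t ≤ ρ x} ⊆ Ioc 0 x := fun t ⟨ht, htx⟩ =>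
    ⟨ht, (hρ_mono.le_iff_le (mem_Ici.mpr ht.le) hx).mp htx⟩
  calc ∫⁻ t in Ioi 0 ∩ {t | ρ t ≤ ρ x}, ENNReal.ofReal (ρ t ^ (-s))
      ≤ ∫⁻ t in Ioc 0 x, ENNReal.ofReal (ρ t ^ (-s)) := lintegral_mono_set hsub
    _ ≤ ∫⁻ t in Ioc 0 x, ENNReal.ofReal (ρ x ^ (-s) * x ^ (γ * s) * t ^ (-(γ * s))) :=
        setLIntegral_mono (by fun_prop) fun t ht => ENNReal.ofReal_le_ofReal <|
          rpow_neg_le_of_antitoneOn_div_rpow hratio hρx hs ht.1 ht.2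
    _ = ENNReal.ofReal (ρ x ^ (-s) * x / (1 - γ * s)) := by
        rw [lintegral_Ioc_zero_mul_rpow_neg (by positivity) hγs hx, mul_assoc,
          ← Real.rpow_add' hx (by linarith), add_sub_cancel, Real.rpow_one]

theorem stmt_3_general (p γ : ℝ) (a ρ : ℝ → ℝ)
    (hγ : 0 < γ) (hγp : γ < p)
    (hρ_pos : ∀ x : ℝ, 0 ≤ x → 0 < ρ x) (hρ_mono : StrictMonoOn ρ (Set.Ici 0))
    (hratio : AntitoneOn (fun x : ℝ => ρ x / x ^ γ) (Set.Ioi 0))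
    (hyp : ∀ δ : ℝ, 0 < δ →
      ∑' n : {n : ℕ | 1 ≤ n ∧ 2 * δ ≤ a n}, ENNReal.ofReal (a (n : ℕ) ^ (1 / p)) ≤
        ENNReal.ofReal ((1 - 2 ^ (-(1 / p)) : ℝ)⁻¹) *
          ∫⁻ t in Set.Ioi (0 : ℝ) ∩ {t : ℝ | ρ t ≤ 1 / δ},
            ENNReal.ofReal (ρ t ^ (-(1 / p)))) :
    ∃ C : ℝ, 0 < C ∧ ∀ x : ℝ, 0 ≤ x →
      (1 / ρ x) ^ (1 / p) * (Nat.card {n : ℕ | 1 ≤ n ∧ 2 * (1 / ρ x) ≤ a n} : ℝ) ≤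
        C * (1 / ρ x) ^ (1 / p) * x := by
  have hp : 0 < p := hγ.trans hγp
  have hs : 0 < 1 / p := by positivity
  have hγs : γ * (1 / p) < 1 := by rwa [mul_one_div, div_lt_one hp]
  have hγs' : 0 < 1 - γ * (1 / p) := by linarith
  have hK : 0 < (1 - 2 ^ (-(1 / p)) : ℝ)⁻¹ := inv_pos.mpr <| sub_pos.mpr <|
    Real.rpow_lt_one_of_one_lt_of_neg one_lt_two (neg_neg_of_pos hs)
  refine ⟨(1 - 2 ^ (-(1 / p)))⁻¹ / (2 ^ (1 / p) * (1 - γ * (1 / p))), by positivity,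
    fun x hx => ?_⟩
  set K : ℝ := (1 - 2 ^ (-(1 / p)))⁻¹
  have hρx := hρ_pos x hx
  set δ := 1 / ρ x
  have hδ : 0 < δ := by positivity
  have hδs : δ ^ (1 / p) = ρ x ^ (-(1 / p)) := by
    rw [Real.rpow_neg hρx.le, ← Real.inv_rpow hρx.le, ← one_div]
  set N := Nat.card {n : ℕ | 1 ≤ n ∧ 2 * δ ≤ a n}
  have hcount : ENNReal.ofReal (N * (2 * δ) ^ (1 / p)) ≤
      ENNReal.ofReal (K * (δ ^ (1 / p) * x / (1 - γ * (1 / p)))) := calc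
    _ = N * ENNReal.ofReal ((2 * δ) ^ (1 / p)) := by
        rw [ENNReal.ofReal_mul (by positivity), ENNReal.ofReal_natCast]
    _ ≤ _ := natCard_mul_le_tsum fun n =>
        ENNReal.ofReal_le_ofReal (Real.rpow_le_rpow (by positivity) n.2.2 hs.le)
    _ ≤ _ := hyp δ hδ
    _ ≤ ENNReal.ofReal K * ENNReal.ofReal (δ ^ (1 / p) * x / (1 - γ * (1 / p))) := by
        gcongr
        rw [one_div_one_div, hδs]
        exact setLIntegral_sublevel_rpow_neg_le hρ_mono hratio hρx hx hs.le hγs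
    _ = _ := (ENNReal.ofReal_mul hK.le).symm
  rw [ENNReal.ofReal_le_ofReal_iff (by positivity), Real.mul_rpow zero_le_two hδ.le] at hcount
  have h2s : (0 : ℝ) < 2 ^ (1 / p) := by positivity
  rw [show K / (2 ^ (1 / p) * (1 - γ * (1 / p))) * δ ^ (1 / p) * x =
      K * (δ ^ (1 / p) * x / (1 - γ * (1 / p))) / 2 ^ (1 / p) by field_simp, le_div_iff₀ h2s]
  linarith

/-- Counting-function estimate from the key inequality in the proof of Lemma 2.10:
`δ^{1/p} · #{n ≥ 1 : a(n) ≥ 2δ} ≤ C · δ^{1/p} · ρ⁻¹(1/δ)` for `δ` in the range of `1/ρ`. -/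
theorem stmt_3 (p γ : ℝ) (a ρ : ℝ → ℝ)
    (hγ : 0 < γ) (hγp : γ < p)
    (ha_pos : ∀ t : ℝ, 0 ≤ t → 0 < a t) (ha_anti : StrictAntiOn a (Set.Ici 0))
    (ha_lim : Tendsto a atTop (nhds 0))
    (hρ_pos : ∀ x : ℝ, 0 ≤ x → 0 < ρ x) (hρ_mono : StrictMonoOn ρ (Set.Ici 0))
    (hratio : AntitoneOn (fun x : ℝ => ρ x / x ^ γ) (Set.Ioi 0))
    (hyp : ∀ δ : ℝ, 0 < δ →
      ∑' n : {n : ℕ | 1 ≤ n ∧ 2 * δ ≤ a n}, ENNReal.ofReal (a (n : ℕ) ^ (1 / p)) ≤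
        ENNReal.ofReal ((1 - 2 ^ (-(1 / p)) : ℝ)⁻¹) *
          ∫⁻ t in Set.Ioi (0 : ℝ) ∩ {t : ℝ | ρ t ≤ 1 / δ},
            ENNReal.ofReal (ρ t ^ (-(1 / p)))) :
    ∃ C : ℝ, 0 < C ∧ ∀ x : ℝ, 0 ≤ x →
      (1 / ρ x) ^ (1 / p) * (Nat.card {n : ℕ | 1 ≤ n ∧ 2 * (1 / ρ x) ≤ a n} : ℝ) ≤
        C * (1 / ρ x) ^ (1 / p) * x :=
  stmt_3_general p γ a ρ hγ hγp hρ_pos hρ_mono hratio hyp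
end

section
/- Let φ be holomorphic on a disc D(z, r) ⊂ ℂ in the complex plane (r > 0). Then for every h holomorphic on D(z, r), the mean oscillation of the conjugate satisfies: (1/Area(D(z,r))) ∫_{D(z,r)} |conj(φ(w)) − conj(φ(z))|² dA(w) = inf over h holomorphic on D(z,r) of (1/Area(D(z,r))) ∫_{D(z,r)} |conj(φ(w)) − h(w)|² dA(w). In other words, the constant function conj(φ(z)) achieves the infimal L² distance from conj(φ) to holomorphic functions on the disc. -/
open MeasureTheory Metric
open Complex Real

lemma circle_mean {f : ℂ → ℂ} {c : ℂ} {s : ℝ} (hs : 0 < s)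
    (hc : ContinuousOn f (closedBall c s))
    (hd : DifferentiableOn ℂ f (ball c s)) :
    ∫ θ in (0 : ℝ)..(2 * π), f (circleMap c s θ) = (2 * π) * f c := by
  have key := circleIntegral_sub_center_inv_smul_of_differentiable_on_off_countable hs
    Set.countable_empty hc (fun w hw => hd.differentiableAt (isOpen_ball.mem_nhds hw.1))
  rw [circleIntegral] at key
  simp only [deriv_circleMap, circleMap_sub_center, smul_eq_mul] at key
  have h1 : ∀ θ : ℝ, circleMap 0 s θ * I * ((circleMap 0 s θ)⁻¹ * f (circleMap c s θ))
      = I * f (circleMap c s θ) := by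
    intro θ
    field_simp [circleMap_ne_center hs.ne']
  simp only [h1] at key
  rw [intervalIntegral.integral_const_mul] at key
  have : I * ∫ θ in (0:ℝ)..(2*π), f (circleMap c s θ) = I * ((2*π) * f c) := by
    rw [key]; ring
  exact mul_left_cancel₀ I_ne_zero this

lemma cb_zero {F : ℂ → ℂ} {z : ℂ} {s : ℝ} (hs : 0 < s)
    (hc : ContinuousOn F (closedBall z s)) (hd : DifferentiableOn ℂ F (ball z s))
    (h0 : F z = 0) :
    ∫ w in ball z s, F w = 0 := by
  set G : ℂ → ℂ := fun w => F (z + w) with hG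
  have htrans : ∫ w in ball z s, F w = ∫ w in ball 0 s, G w := by
    have hemb := (MeasurableEquiv.addLeft z).measurableEmbedding
    have hmp : MeasurePreserving (fun w : ℂ => z + w) volume volume :=
      measurePreserving_add_left volume z
    have hpre : (fun w : ℂ => z + w) ⁻¹' ball z s = ball 0 s := by
      ext w; simp [mem_ball_iff_norm, add_sub_cancel_left]
    rw [← hpre]
    exact (hmp.setIntegral_preimage_emb hemb F (ball z s)).symm
  rw [htrans]
  have hGc : ContinuousOn G (closedBall 0 s) := by
    apply hc.comp (by fun_prop)
    intro w hw
    simpa [mem_closedBall_iff_norm, add_sub_cancel_left] using hw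
  -- polar coordinates
  have hind : ∫ w in ball 0 s, G w = ∫ w, Set.indicator (ball 0 s) G w := by
    rw [integral_indicator measurableSet_ball]
  rw [hind, ← Complex.integral_comp_polarCoord_symm]
  have hstep : ∀ p ∈ polarCoord.target,
      p.1 • Set.indicator (ball 0 s) G (Complex.polarCoord.symm p)
        = Set.indicator ((fun q : ℝ × ℝ => q.1) ⁻¹' Set.Ioo (-s) s)
            (fun q => q.1 • G (Complex.polarCoord.symm q)) p := by
    intro p hp
    by_cases hmem : Complex.polarCoord.symm p ∈ ball 0 s
    · rw [Set.indicator_of_mem hmem, Set.indicator_of_mem]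
      simp only [Set.mem_preimage, Set.mem_Ioo]
      have := mem_ball_zero_iff.1 hmem
      rw [Complex.norm_polarCoord_symm] at this
      constructor <;> [linarith [abs_nonneg p.1, neg_abs_le p.1]; linarith [le_abs_self p.1]]
    · rw [Set.indicator_of_notMem hmem, Set.indicator_of_notMem, smul_zero]
      simp only [Set.mem_preimage, Set.mem_Ioo]
      intro hcon
      exact hmem (mem_ball_zero_iff.2 (by
        rw [Complex.norm_polarCoord_symm]
        exact abs_lt.2 ⟨hcon.1, hcon.2⟩))
  rw [setIntegral_congr_fun polarCoord.open_target.measurableSet hstep]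
  rw [setIntegral_indicator (measurable_fst (measurableSet_Ioo (a := -s) (b := s)))]
  have hset : polarCoord.target ∩ ((fun q : ℝ × ℝ => q.1) ⁻¹' Set.Ioo (-s) s)
      = Set.Ioo 0 s ×ˢ Set.Ioo (-π) π := by
    rw [polarCoord_target]
    ext p
    simp only [Set.mem_inter_iff, Set.mem_prod, Set.mem_Ioi, Set.mem_Ioo, Set.mem_preimage]
    constructor
    · rintro ⟨⟨h1, h2⟩, h3, h4⟩; exact ⟨⟨h1, h4⟩, h2⟩
    · rintro ⟨⟨h1, h2⟩, h3⟩; exact ⟨⟨h1, h3⟩, by linarith, h2⟩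
  rw [hset]
  -- continuity of the integrand on a compact rectangle
  have hcont : ContinuousOn (fun q : ℝ × ℝ => q.1 • G (Complex.polarCoord.symm q))
      (Set.Icc 0 s ×ˢ Set.Icc (-π) π) := by
    have hcsymm : Continuous fun q : ℝ × ℝ => (Complex.polarCoord.symm q : ℂ) := by
      simp only [Complex.polarCoord_symm_apply]
      fun_prop
    apply ContinuousOn.smul continuousOn_fst
    apply hGc.comp hcsymm.continuousOn
    intro p hp
    rw [Set.mem_prod] at hp
    rw [mem_closedBall_zero_iff, Complex.norm_polarCoord_symm,
      _root_.abs_of_nonneg hp.1.1]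
    exact hp.1.2
  have hInt : IntegrableOn (fun q : ℝ × ℝ => q.1 • G (Complex.polarCoord.symm q))
      (Set.Ioo 0 s ×ˢ Set.Ioo (-π) π) volume := by
    apply (hcont.integrableOn_compact (isCompact_Icc.prod isCompact_Icc)).mono_set
    exact Set.prod_mono Set.Ioo_subset_Icc_self Set.Ioo_subset_Icc_self
  rw [Measure.volume_eq_prod ℝ ℝ] at hInt ⊢
  rw [setIntegral_prod _ hInt]
  -- inner integral vanishes
  have hinner : ∀ a ∈ Set.Ioo (0:ℝ) s,
      ∫ θ in Set.Ioo (-π) π, ((a, θ).1 • G (Complex.polarCoord.symm (a, θ))) = 0 := by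
    intro a ha
    have hsymm : ∀ θ : ℝ, G (Complex.polarCoord.symm (a, θ)) = F (circleMap z a θ) := by
      intro θ
      rw [Complex.polarCoord_symm_apply]
      simp only [hG, circleMap, Complex.exp_mul_I, Complex.ofReal_cos, Complex.ofReal_sin]
    simp only [hsymm]
    rw [integral_smul]
    have hper : Function.Periodic (fun θ => F (circleMap z a θ)) (2 * π) :=
      (periodic_circleMap z a).comp F
    have h1 : ∫ θ in Set.Ioo (-π) π, F (circleMap z a θ)
        = ∫ θ in (-π)..π, F (circleMap z a θ) := by
      rw [intervalIntegral.integral_of_le (by linarith [Real.pi_pos]),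
        integral_Ioc_eq_integral_Ioo]
    have h2 : ∫ θ in (-π)..π, F (circleMap z a θ)
        = ∫ θ in (0:ℝ)..(2*π), F (circleMap z a θ) := by
      have := hper.intervalIntegral_add_eq (-π) 0
      simpa [show -π + 2*π = π by ring] using this
    rw [h1, h2, circle_mean ha.1 (hc.mono (closedBall_subset_closedBall ha.2.le))
      (hd.mono (ball_subset_ball ha.2.le)), h0, mul_zero, smul_zero]
  rw [setIntegral_congr_fun measurableSet_Ioo hinner]
  simp

lemma mv_zero {F : ℂ → ℂ} {z : ℂ} {r : ℝ} (hr : 0 < r)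
    (hd : DifferentiableOn ℂ F (ball z r)) (hFi : IntegrableOn F (ball z r) volume)
    (h0 : F z = 0) :
    ∫ w in ball z r, F w = 0 := by
  set t : ℕ → ℝ := fun n => r - r / (n + 2) with ht
  have htpos : ∀ n, 0 < t n := by
    intro n
    have h1 : r / (n + 2) < r := by
      rw [div_lt_iff₀ (by positivity)]
      nlinarith [Nat.cast_nonneg (α := ℝ) n]
    simpa [ht] using sub_pos.2 h1
  have htlt : ∀ n, t n < r := fun n => by
    have : 0 < r / (n + 2) := by positivity
    simp [ht]; linarith
  have hmono : Monotone fun n => ball z (t n) := by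
    intro n m hnm
    apply ball_subset_ball
    have : r / (m + 2) ≤ r / (n + 2) := by
      apply div_le_div_of_nonneg_left hr.le (by positivity)
      exact_mod_cast by omega
    simp only [ht]; linarith
  have hunion : ⋃ n, ball z (t n) = ball z r := by
    apply Set.Subset.antisymm
    · exact Set.iUnion_subset fun n => ball_subset_ball (htlt n).le
    · intro w hw
      rw [mem_ball] at hw
      obtain ⟨n, hn⟩ := exists_nat_gt (r / (r - dist w z))
      refine Set.mem_iUnion.2 ⟨n, mem_ball.2 ?_⟩
      have hε : 0 < r - dist w z := by linarith
      have h2 : r / (↑n + 2) < r - dist w z := by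
        rw [div_lt_iff₀ (by positivity)]
        have h3 : r / (r - dist w z) < n + 2 := by linarith [Nat.cast_nonneg (α := ℝ) n]
        calc r = (r / (r - dist w z)) * (r - dist w z) := by field_simp
          _ < (↑n + 2) * (r - dist w z) := by
              apply mul_lt_mul_of_pos_right h3 hε
          _ = (r - dist w z) * (↑n + 2) := by ring
      simp only [ht]; linarith
  have hzero : ∀ n, ∫ w in ball z (t n), F w = 0 := by
    intro n
    apply cb_zero (htpos n) _ (hd.mono (ball_subset_ball (htlt n).le)) h0
    exact (hd.mono (closedBall_subset_ball (htlt n))).continuousOn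
  have htend := MeasureTheory.tendsto_setIntegral_of_monotone
    (fun n => measurableSet_ball) hmono (hunion ▸ hFi)
  rw [hunion] at htend
  simp only [hzero] at htend
  exact (tendsto_const_nhds_iff.1 htend).symm


set_option maxHeartbeats 1000000 in
lemma key {φ h : ℂ → ℂ} {z : ℂ} {r : ℝ} (hr : 0 < r)
    (hφ : DifferentiableOn ℂ φ (ball z r))
    (hφ2 : IntegrableOn (fun w => ‖φ w‖ ^ 2) (ball z r) volume)
    (hh : DifferentiableOn ℂ h (ball z r))
    (hh2 : IntegrableOn (fun w => ‖h w‖ ^ 2) (ball z r) volume) :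
    ∫ w in ball z r, ‖(starRingEnd ℂ) (φ w) - (starRingEnd ℂ) (φ z)‖ ^ 2
      ≤ ∫ w in ball z r, ‖(starRingEnd ℂ) (φ w) - h w‖ ^ 2 := by
  set B := ball z r with hB
  set c : ℂ := (starRingEnd ℂ) (φ z) with hc
  set a : ℂ → ℂ := fun w => (starRingEnd ℂ) (φ w) - c with ha
  set b : ℂ → ℂ := fun w => c - h w with hb
  have hφm : AEStronglyMeasurable φ (volume.restrict B) :=
    hφ.continuousOn.aestronglyMeasurable measurableSet_ball
  have hhm : AEStronglyMeasurable h (volume.restrict B) :=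
    hh.continuousOn.aestronglyMeasurable measurableSet_ball
  have ham : AEStronglyMeasurable a (volume.restrict B) :=
    ((Complex.continuous_conj.comp_aestronglyMeasurable hφm).sub aestronglyMeasurable_const)
  have hbm : AEStronglyMeasurable b (volume.restrict B) :=
    (aestronglyMeasurable_const.sub hhm)
  have hnorm_a : ∀ w, ‖a w‖ = ‖φ w - φ z‖ := by
    intro w
    simp only [ha, hc]
    rw [← map_sub]
    exact RCLike.norm_conj (φ w - φ z)
  have hconst : IntegrableOn (fun _ : ℂ => ‖c‖ ^ 2) B volume := by
    rw [hB]
    exact integrableOn_const measure_ball_lt_top.ne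
  have hconst' : IntegrableOn (fun _ : ℂ => ‖c‖ ^ 2) B volume := hconst
  have hIa : IntegrableOn (fun w => ‖a w‖ ^ 2) B volume := by
    have hg : IntegrableOn (fun w : ℂ => 2 * ‖φ w‖ ^ 2 + 2 * ‖c‖ ^ 2) B volume :=
      (hφ2.const_mul 2).add (hconst.const_mul 2)
    have hm : AEStronglyMeasurable (fun w => ‖a w‖ ^ 2) (volume.restrict B) := by
      exact ham.norm.pow 2
    apply Integrable.mono' hg hm
    filter_upwards with w
    rw [Real.norm_eq_abs, _root_.abs_of_nonneg (by positivity)]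
    have h1 : ‖a w‖ ≤ ‖φ w‖ + ‖c‖ := by
      calc ‖a w‖ ≤ ‖(starRingEnd ℂ) (φ w)‖ + ‖c‖ := norm_sub_le _ _
        _ = ‖φ w‖ + ‖c‖ := by rw [RCLike.norm_conj (φ w)]
    nlinarith [norm_nonneg (a w), norm_nonneg (φ w), norm_nonneg c, sq_nonneg (‖φ w‖ - ‖c‖), sq_nonneg (‖φ w‖ + ‖c‖)]
  have hIb : IntegrableOn (fun w => ‖b w‖ ^ 2) B volume := by
    have hg : IntegrableOn (fun w : ℂ => 2 * ‖h w‖ ^ 2 + 2 * ‖c‖ ^ 2) B volume :=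
      (hh2.const_mul 2).add (hconst.const_mul 2)
    have hm : AEStronglyMeasurable (fun w => ‖b w‖ ^ 2) (volume.restrict B) := by
      exact hbm.norm.pow 2
    apply Integrable.mono' hg hm
    filter_upwards with w
    rw [Real.norm_eq_abs, _root_.abs_of_nonneg (by positivity)]
    have h1 : ‖b w‖ ≤ ‖c‖ + ‖h w‖ := norm_sub_le _ _
    nlinarith [norm_nonneg (b w), norm_nonneg (h w), norm_nonneg c, sq_nonneg (‖c‖ - ‖h w‖), sq_nonneg (‖c‖ + ‖h w‖)]
  have h12 : IntegrableOn (fun w => ‖a w‖ ^ 2 + ‖b w‖ ^ 2) B volume := hIa.add hIb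
  have hIF : IntegrableOn (fun w => (φ w - φ z) * (c - h w)) B volume := by
    have hm : AEStronglyMeasurable (fun w => (φ w - φ z) * (c - h w)) (volume.restrict B) :=
      (hφm.sub aestronglyMeasurable_const).mul hbm
    have hg : IntegrableOn (fun w => (1/2) * (‖a w‖ ^ 2 + ‖b w‖ ^ 2)) B volume :=
      h12.const_mul _
    apply Integrable.mono' hg hm
    filter_upwards with w
    show ‖(φ w - φ z) * (c - h w)‖ ≤ 1/2 * (‖a w‖ ^ 2 + ‖b w‖ ^ 2)
    rw [norm_mul, ← hnorm_a w]
    have e2 : ‖c - h w‖ = ‖b w‖ := rfl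
    rw [e2]
    nlinarith [norm_nonneg (a w), norm_nonneg (b w), sq_nonneg (‖a w‖ - ‖b w‖)]
  have hIab : IntegrableOn (fun w => a w * (starRingEnd ℂ) (b w)) B volume := by
    have hm : AEStronglyMeasurable (fun w => a w * (starRingEnd ℂ) (b w))
        (volume.restrict B) :=
      ham.mul (Complex.continuous_conj.comp_aestronglyMeasurable hbm)
    have hg : IntegrableOn (fun w => (1/2) * (‖a w‖ ^ 2 + ‖b w‖ ^ 2)) B volume :=
      h12.const_mul _
    apply Integrable.mono' hg hm
    filter_upwards with w
    show ‖a w * (starRingEnd ℂ) (b w)‖ ≤ 1/2 * (‖a w‖ ^ 2 + ‖b w‖ ^ 2)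
    rw [norm_mul, RCLike.norm_conj (b w)]
    nlinarith [norm_nonneg (a w), norm_nonneg (b w), sq_nonneg (‖a w‖ - ‖b w‖)]
  have hF0 : ∫ w in B, (φ w - φ z) * (c - h w) = 0 := by
    rw [hB] at hIF ⊢
    exact mv_zero hr (((hφ.sub (differentiableOn_const _)).mul
      ((differentiableOn_const _).sub hh)).mono (by rw [hB])) hIF (by simp)
  have hab0 : ∫ w in B, a w * (starRingEnd ℂ) (b w) = 0 := by
    have heq : (fun w => a w * (starRingEnd ℂ) (b w))
        = fun w => (starRingEnd ℂ) ((φ w - φ z) * (c - h w)) := by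
      funext w
      simp only [ha, hb, hc, map_mul, map_sub, Complex.conj_conj]
    rw [heq, integral_conj, hF0, map_zero]
  have hpt : ∀ w, ‖(starRingEnd ℂ) (φ w) - h w‖ ^ 2
      = ‖a w‖ ^ 2 + ‖b w‖ ^ 2 + 2 * (a w * (starRingEnd ℂ) (b w)).re := by
    intro w
    have hsum : (starRingEnd ℂ) (φ w) - h w = a w + b w := by
      simp only [ha, hb]; ring
    rw [hsum]
    simp [Complex.sq_norm, Complex.normSq_add]
  have hre : IntegrableOn (fun w => 2 * (a w * (starRingEnd ℂ) (b w)).re) B volume :=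
    (hIab.re.const_mul 2)
  have hsplit : ∫ w in B, (‖a w‖ ^ 2 + ‖b w‖ ^ 2 + 2 * (a w * (starRingEnd ℂ) (b w)).re)
      = ((∫ w in B, ‖a w‖ ^ 2) + ∫ w in B, ‖b w‖ ^ 2)
        + 2 * ∫ w in B, (a w * (starRingEnd ℂ) (b w)).re := by
    rw [integral_add h12 hre, integral_add hIa hIb, integral_const_mul]
  have hre0 : ∫ w in B, (a w * (starRingEnd ℂ) (b w)).re = 0 := by
    have := integral_re hIab
    rw [hab0] at this
    simpa using this
  have hbnn : 0 ≤ ∫ w in B, ‖b w‖ ^ 2 := integral_nonneg fun w => by positivity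
  calc ∫ w in B, ‖a w‖ ^ 2
      ≤ (∫ w in B, ‖a w‖ ^ 2) + ∫ w in B, ‖b w‖ ^ 2 := by linarith
    _ = ∫ w in B, (‖a w‖ ^ 2 + ‖b w‖ ^ 2 + 2 * (a w * (starRingEnd ℂ) (b w)).re) := by
        rw [hsplit, hre0]; ring
    _ = ∫ w in B, ‖(starRingEnd ℂ) (φ w) - h w‖ ^ 2 := by
        simp_rw [hpt]


/-- Lemma 5.1: for holomorphic `φ`, the constant `conj (φ z)` achieves the infimal
mean-square distance from `conj ∘ φ` to holomorphic functions on the disc `D(z,r)`. -/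
theorem stmt_4 (φ : ℂ → ℂ) (z : ℂ) (r : ℝ) (hr : 0 < r)
    (hφ : DifferentiableOn ℂ φ (ball z r))
    (hφ2 : IntegrableOn (fun w => ‖φ w‖ ^ 2) (ball z r) volume) :
    (volume (ball z r)).toReal⁻¹ *
        ∫ w in ball z r, ‖(starRingEnd ℂ) (φ w) - (starRingEnd ℂ) (φ z)‖ ^ 2 =
      sInf {x : ℝ | ∃ h : ℂ → ℂ, DifferentiableOn ℂ h (ball z r) ∧
        IntegrableOn (fun w => ‖h w‖ ^ 2) (ball z r) volume ∧
        x = (volume (ball z r)).toReal⁻¹ *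
          ∫ w in ball z r, ‖(starRingEnd ℂ) (φ w) - h w‖ ^ 2} := by
  set S := {x : ℝ | ∃ h : ℂ → ℂ, DifferentiableOn ℂ h (ball z r) ∧
        IntegrableOn (fun w => ‖h w‖ ^ 2) (ball z r) volume ∧
        x = (volume (ball z r)).toReal⁻¹ *
          ∫ w in ball z r, ‖(starRingEnd ℂ) (φ w) - h w‖ ^ 2} with hS
  set L : ℝ := (volume (ball z r)).toReal⁻¹ *
      ∫ w in ball z r, ‖(starRingEnd ℂ) (φ w) - (starRingEnd ℂ) (φ z)‖ ^ 2 with hL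
  have hmem : L ∈ S := by
    refine ⟨fun _ => (starRingEnd ℂ) (φ z), differentiableOn_const _, ?_, rfl⟩
    exact integrableOn_const measure_ball_lt_top.ne
  have hlb : ∀ x ∈ S, L ≤ x := by
    rintro x ⟨h, hd, hi2, rfl⟩
    apply mul_le_mul_of_nonneg_left (key hr hφ hφ2 hd hi2)
    exact inv_nonneg.2 ENNReal.toReal_nonneg
  exact le_antisymm (le_csInf ⟨L, hmem⟩ hlb) (csInf_le ⟨L, hlb⟩ hmem)
end
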